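/- arXiv:2511.13362 — 4 statements merged into one kernel-verified Lean document; each statement's English description precedes it below -/
import Mathlib

section
/- Let M ∈ ℝ^{3×3} be a nonnegative irreducible matrix with diagonal entries m_{11}, m_{22}, m_{33} all strictly less than some λ* > 0. Then ρ(M) < λ* if and only if det(λ* I − M) > 0. -/
/-!
Write `p` for the characteristic polynomial of `M`, so that `det (λ I - M) = p λ`.
If `p λ ≤ 0`, the monic real polynomial `p` has a real root `≥ λ` by the intermediate value
theorem, hence `ρ(M) ≥ λ`. Conversely, if `M z = μ z` with `z ≠ 0` and `|μ| ≥ λ`, the triangle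
inequality gives `λ |z| ≤ M |z|` entrywise, so the Z-matrix `A = λ I - M`, whose diagonal is
positive, sends the nonzero nonnegative vector `|z|` to a nonpositive one. For a `3 × 3` Z-matrix
this forces `det A ≤ 0`: either one of the principal minors `P`, `Q` through the middle index is
nonpositive, which already makes `det A` nonpositive, or eliminating the middle coordinate yields
`P Q ≤ R S` for the adjacent minors `R`, `S`, and Sylvester's identity `a₁₁ det A = P Q - R S`
concludes.
-/

open Matrix

/-- Spectral radius of a real square matrix: the supremum of the absolute values of the
complex roots of its characteristic polynomial (together with 0). -/
noncomputable def specRad {n : ℕ} (M : Matrix (Fin n) (Fin n) ℝ) : ℝ :=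
  sSup (insert (0:ℝ)
    ((fun z : ℂ => ‖z‖) '' {μ : ℂ | ((M.map (Complex.ofReal)).charpoly).IsRoot μ}))

open Polynomial

theorem Matrix.det_smul_one_sub_eq_eval_charpoly {n R : Type*} [Fintype n] [DecidableEq n]
    [CommRing R] (M : Matrix n n R) (t : R) :
    (t • (1 : Matrix n n R) - M).det = M.charpoly.eval t := by
  rw [eval_charpoly, scalar_apply, smul_one_eq_diagonal]

theorem Polynomial.Monic.exists_root_ge_of_eval_nonpos {p : ℝ[X]} (hp : p.Monic) {x : ℝ}
    (hx : p.eval x ≤ 0) : ∃ r, x ≤ r ∧ p.IsRoot r := by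
  have hdeg : 0 < p.degree := by
    rw [← natDegree_pos_iff_degree_pos, hp.natDegree_pos]
    rintro rfl
    norm_num at hx
  have hlim := tendsto_atTop_of_leadingCoeff_nonneg p hdeg (by simp [hp.leadingCoeff])
  obtain ⟨X, hX, hxX⟩ := ((hlim.eventually_ge_atTop 0).and (Filter.eventually_ge_atTop x)).exists
  obtain ⟨r, hr, hr0⟩ := intermediate_value_Icc hxX p.continuous.continuousOn ⟨hx, hX⟩
  exact ⟨r, hr.1, hr0⟩

theorem Matrix.exists_mulVec_eq_smul_of_isRoot_charpoly {n K : Type*} [Fintype n] [DecidableEq n]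
    [Field K] {A : Matrix n n K} {μ : K} (hμ : A.charpoly.IsRoot μ) :
    ∃ z ≠ 0, A *ᵥ z = μ • z := by
  rw [IsRoot, ← det_smul_one_sub_eq_eval_charpoly] at hμ
  obtain ⟨z, hz0, hz⟩ := exists_mulVec_eq_zero_iff.mpr hμ
  refine ⟨z, hz0, ?_⟩
  rw [sub_mulVec, smul_mulVec, one_mulVec, sub_eq_zero] at hz
  exact hz.symm

theorem norm_smul_le_mulVec_norm {n : Type*} [Fintype n] {M : Matrix n n ℝ}
    (hM : ∀ i j, 0 ≤ M i j) {μ : ℂ} {z : n → ℂ} (hz : M.map (↑) *ᵥ z = μ • z) (i : n) :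
    ‖μ‖ * ‖z i‖ ≤ (M *ᵥ fun j => ‖z j‖) i :=
  calc ‖μ‖ * ‖z i‖ = ‖∑ j, (M i j : ℂ) * z j‖ := by
        rw [← norm_mul, ← smul_eq_mul, ← Pi.smul_apply, ← hz]; rfl
    _ ≤ ∑ j, ‖(M i j : ℂ) * z j‖ := norm_sum_le _ _
    _ = (M *ᵥ fun j => ‖z j‖) i := by
        simp only [norm_mul, Complex.norm_real, Real.norm_of_nonneg (hM i _)]; rfl

theorem Matrix.det_fin_three_le_of_offDiag_nonpos {A : Matrix (Fin 3) (Fin 3) ℝ}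
    (hdiag : ∀ i, 0 ≤ A i i) (hoff : ∀ i j, i ≠ j → A i j ≤ 0) :
    A.det ≤ A 2 2 * (A 0 0 * A 1 1 - A 0 1 * A 1 0) ∧
      A.det ≤ A 0 0 * (A 1 1 * A 2 2 - A 1 2 * A 2 1) := by
  have h01 := hoff 0 1 (by decide); have h02 := hoff 0 2 (by decide)
  have h10 := hoff 1 0 (by decide); have h12 := hoff 1 2 (by decide)
  have h20 := hoff 2 0 (by decide); have h21 := hoff 2 1 (by decide)
  have hcyc₁ := mul_nonpos_of_nonneg_of_nonpos (mul_nonneg_of_nonpos_of_nonpos h01 h12) h20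
  have hcyc₂ := mul_nonpos_of_nonneg_of_nonpos (mul_nonneg_of_nonpos_of_nonpos h02 h10) h21
  have hmid := mul_nonneg (hdiag 1) (mul_nonneg_of_nonpos_of_nonpos h02 h20)
  rw [det_fin_three]
  constructor
  · linarith [mul_nonneg (hdiag 0) (mul_nonneg_of_nonpos_of_nonpos h12 h21)]
  · linarith [mul_nonneg (hdiag 2) (mul_nonneg_of_nonpos_of_nonpos h01 h10)]

theorem mul_le_mul_of_le_mul_of_le_mul {P Q R S u v : ℝ} (hP : 0 ≤ P) (hQ : 0 ≤ Q) (hR : 0 ≤ R)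
    (hS : 0 ≤ S) (hu : P * u ≤ R * v) (hv : Q * v ≤ S * u) (huv : 0 < u + v) :
    P * Q ≤ R * S := by
  have hchain : (P * Q) * (u + v) ≤ (R * S) * (u + v) := by
    linarith [mul_le_mul_of_nonneg_left hu hQ, mul_le_mul_of_nonneg_left hv hR,
      mul_le_mul_of_nonneg_left hv hP, mul_le_mul_of_nonneg_left hu hS]
  exact le_of_mul_le_mul_right hchain huv

theorem Matrix.det_fin_three_nonpos_of_mulVec_nonpos {A : Matrix (Fin 3) (Fin 3) ℝ}
    (hdiag : ∀ i, 0 < A i i) (hoff : ∀ i j, i ≠ j → A i j ≤ 0)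
    {y : Fin 3 → ℝ} (hy : ∀ i, 0 ≤ y i) (hy0 : y ≠ 0) (hAy : A *ᵥ y ≤ 0) : A.det ≤ 0 := by
  have hrow (i : Fin 3) : A i 0 * y 0 + A i 1 * y 1 + A i 2 * y 2 ≤ 0 := by
    simpa [mulVec, dotProduct, Fin.sum_univ_three] using hAy i
  have h01 := hoff 0 1 (by decide); have h02 := hoff 0 2 (by decide)
  have h10 := hoff 1 0 (by decide); have h12 := hoff 1 2 (by decide)
  have h20 := hoff 2 0 (by decide); have h21 := hoff 2 1 (by decide)
  have h11 := (hdiag 1).le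
  obtain ⟨hdetP, hdetQ⟩ := det_fin_three_le_of_offDiag_nonpos (fun i => (hdiag i).le) hoff
  set P := A 0 0 * A 1 1 - A 0 1 * A 1 0 with hP
  set Q := A 1 1 * A 2 2 - A 1 2 * A 2 1 with hQ
  set R := A 0 1 * A 1 2 - A 1 1 * A 0 2 with hR
  set S := A 1 0 * A 2 1 - A 1 1 * A 2 0 with hS
  have hsylvester : A 1 1 * A.det = P * Q - R * S := by rw [det_fin_three]; ring
  have hR0 : 0 ≤ R := by
    nlinarith [mul_nonneg_of_nonpos_of_nonpos h01 h12, mul_nonpos_of_nonneg_of_nonpos h11 h02]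
  have hS0 : 0 ≤ S := by
    nlinarith [mul_nonneg_of_nonpos_of_nonpos h10 h21, mul_nonpos_of_nonneg_of_nonpos h11 h20]
  -- eliminate `y 1` from rows 0 and 2 by means of row 1
  have hPy : P * y 0 ≤ R * y 2 := by
    nlinarith [mul_le_mul_of_nonneg_left (hrow 0) h11, mul_le_mul_of_nonpos_left (hrow 1) h01]
  have hQy : Q * y 2 ≤ S * y 0 := by
    nlinarith [mul_le_mul_of_nonneg_left (hrow 2) h11, mul_le_mul_of_nonpos_left (hrow 1) h21]
  clear_value P Q R S
  rcases le_or_gt P 0 with hP0 | hP0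
  · exact hdetP.trans (mul_nonpos_of_nonneg_of_nonpos (hdiag 2).le hP0)
  rcases le_or_gt Q 0 with hQ0 | hQ0
  · exact hdetQ.trans (mul_nonpos_of_nonneg_of_nonpos (hdiag 0).le hQ0)
  have hy02 : 0 < y 0 + y 2 := by
    by_contra! h
    have hy0' : y 0 = 0 := by linarith [hy 0, hy 2]
    have hy2' : y 2 = 0 := by linarith [hy 0, hy 2]
    have hy1' : y 1 = 0 := by nlinarith [hrow 1, hy 1, hdiag 1]
    exact hy0 (funext fun i => by fin_cases i <;> assumption)
  have hPQRS := mul_le_mul_of_le_mul_of_le_mul hP0.le hQ0.le hR0 hS0 hPy hQy hy02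
  exact nonpos_of_mul_nonpos_right (by linarith) (hdiag 1)

theorem specRad_lt_iff {n : ℕ} (M : Matrix (Fin n) (Fin n) ℝ) {lam : ℝ} : specRad M < lam ↔
    0 < lam ∧ ∀ μ : ℂ, (M.map Complex.ofReal).charpoly.IsRoot μ → ‖μ‖ < lam := by
  have hfin := ((finite_setOfPred_isRoot (charpoly_monic (M.map Complex.ofReal)).ne_zero).image
    (fun z : ℂ => ‖z‖)).insert 0
  rw [specRad, hfin.csSup_lt_iff (Set.insert_nonempty _ _), Set.forall_mem_insert,
    Set.forall_mem_image]
  rfl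

theorem stmt6_general (M : Matrix (Fin 3) (Fin 3) ℝ)
    (hnn : ∀ i j, 0 ≤ M i j)
    (lam : ℝ) (hlam : 0 < lam)
    (hdiag : ∀ i, M i i < lam) :
    specRad M < lam ↔ 0 < (lam • (1 : Matrix (Fin 3) (Fin 3) ℝ) - M).det := by
  rw [specRad_lt_iff]
  constructor
  · rintro ⟨-, hroots⟩
    by_contra! hdet
    rw [det_smul_one_sub_eq_eval_charpoly] at hdet
    obtain ⟨r, hr, hroot⟩ := (charpoly_monic M).exists_root_ge_of_eval_nonpos hdet
    have hrootC : (M.map Complex.ofRealHom).charpoly.IsRoot r := by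
      rw [charpoly_map]
      exact hroot.map
    have hr' := hroots r hrootC
    rw [Complex.norm_real, Real.norm_eq_abs] at hr'
    linarith [le_abs_self r]
  · refine fun hdet => ⟨hlam, fun μ hμ => ?_⟩
    by_contra! hμlam
    obtain ⟨z, hz0, hz⟩ := exists_mulVec_eq_smul_of_isRoot_charpoly hμ
    have hzle := norm_smul_le_mulVec_norm hnn hz
    refine (det_fin_three_nonpos_of_mulVec_nonpos (fun i => ?_) (fun i j hij => ?_)
      (y := fun j => ‖z j‖) (fun i => norm_nonneg _) ?_ (fun i => ?_)).not_gt hdet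
    · simpa using hdiag i
    · simpa [one_apply_ne hij] using hnn i j
    · exact fun h => hz0 (funext fun i => norm_eq_zero.mp (congr_fun h i))
    · simp only [sub_mulVec, smul_mulVec, one_mulVec, Pi.sub_apply, Pi.smul_apply, smul_eq_mul,
        Pi.zero_apply]
      nlinarith [hzle i, norm_nonneg (z i)]

/-- for a 3×3 nonnegative irreducible matrix M with diagonal entries below
λ* > 0, the condition ρ(M) < λ* is equivalent to det(λ*I − M) > 0. -/
theorem stmt6 (M : Matrix (Fin 3) (Fin 3) ℝ)
    (hnn : ∀ i j, 0 ≤ M i j)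
    (hirr : ∀ i j : Fin 3, Relation.TransGen (fun a b => 0 < M a b) i j)
    (lam : ℝ) (hlam : 0 < lam)
    (hdiag : ∀ i, M i i < lam) :
    specRad M < lam ↔ 0 < (lam • (1 : Matrix (Fin 3) (Fin 3) ℝ) - M).det :=
  stmt6_general M hnn lam hlam hdiag
end

section
/- Let λ ∈ (0,1) and let (e_m)_{m≥0} be a nonnegative non-increasing sequence with S_e = Σ_{m=0}^∞ e_m < ∞. Define S_t = Σ_{m=0}^{t−1} λ^{t−1−m} e_m. Then Σ_{t=0}^{k−1} S_t² ≤ e_0 S_e / (1−λ)² for every k ≥ 1. -/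
/-- with λ ∈ (0,1), (e_m) nonnegative, non-increasing and summable with sum
S_e, and S_t = Σ_{m=0}^{t−1} λ^{t−1−m} e_m, one has Σ_{t=0}^{k−1} S_t² ≤ e_0 S_e/(1−λ)². -/
theorem stmt7 (lam : ℝ) (hlam : lam ∈ Set.Ioo (0:ℝ) 1)
    (e : ℕ → ℝ) (hnn : ∀ m, 0 ≤ e m) (hmono : ∀ m, e (m+1) ≤ e m)
    (hsum : Summable e) (Se : ℝ) (hSe : Se = ∑' m, e m)
    (S : ℕ → ℝ) (hS : ∀ t, S t = ∑ m ∈ Finset.range t, lam^(t-1-m) * e m)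
    (k : ℕ) (hk : 1 ≤ k) :
    ∑ t ∈ Finset.range k, (S t)^2 ≤ e 0 * Se / (1-lam)^2 := by
  obtain ⟨hl0, hl1⟩ := hlam
  have h1l : 0 < 1 - lam := by linarith
  have hS0 : S 0 = 0 := by simp [hS]
  -- recursion
  have hrec : ∀ t, S (t+1) = lam * S t + e t := by
    intro t
    rw [hS, hS, Finset.sum_range_succ, Finset.mul_sum]
    have : ∀ m ∈ Finset.range t, lam ^ (t + 1 - 1 - m) * e m
        = lam * (lam ^ (t - 1 - m) * e m) := by
      intro m hm
      rw [Finset.mem_range] at hm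
      have : t + 1 - 1 - m = (t - 1 - m) + 1 := by omega
      rw [this, pow_succ]; ring
    rw [Finset.sum_congr rfl this]
    simp
  -- monotone: e m ≤ e 0
  have he0 : ∀ m, e m ≤ e 0 := by
    intro m; induction m with
    | zero => exact le_rfl
    | succ n ih => exact le_trans (hmono n) ih
  -- nonneg of S
  have hSnn : ∀ t, 0 ≤ S t := by
    intro t
    rw [hS]
    exact Finset.sum_nonneg fun m _ => mul_nonneg (pow_nonneg hl0.le _) (hnn m)
  have hSe_nn : 0 ≤ Se := hSe ▸ tsum_nonneg hnn
  -- bound: S t ≤ e 0 / (1 - lam)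
  have hSb : ∀ t, S t ≤ e 0 / (1 - lam) := by
    intro t; induction t with
    | zero => rw [hS0]; exact div_nonneg (hnn 0) h1l.le
    | succ n ih =>
      rw [hrec n]
      have h1 : lam * S n ≤ lam * (e 0 / (1 - lam)) :=
        mul_le_mul_of_nonneg_left ih hl0.le
      have h2 : e n ≤ e 0 := he0 n
      have : lam * (e 0 / (1 - lam)) + e 0 = e 0 / (1 - lam) := by
        field_simp; ring
      linarith
  -- partial sums of e bounded by Se
  have hE : ∀ n, ∑ t ∈ Finset.range n, e t ≤ Se := by
    intro n; rw [hSe]; exact Summable.sum_le_tsum _ (fun i _ => hnn i) hsum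
  -- bound on Σ S t
  have hT : ∀ n, ∑ t ∈ Finset.range n, S t ≤ Se / (1 - lam) := by
    intro n; induction n with
    | zero => simp; positivity
    | succ n ih =>
      have key : ∑ t ∈ Finset.range (n+1), S t
          = lam * ∑ t ∈ Finset.range n, S t + ∑ t ∈ Finset.range n, e t := by
        rw [Finset.sum_range_succ' S, hS0, add_zero, Finset.mul_sum,
          ← Finset.sum_add_distrib]
        exact Finset.sum_congr rfl fun t _ => hrec t
      rw [key]
      have h1 : lam * ∑ t ∈ Finset.range n, S t ≤ lam * (Se / (1 - lam)) :=
        mul_le_mul_of_nonneg_left ih hl0.le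
      have h2 := hE n
      have : lam * (Se / (1 - lam)) + Se = Se / (1 - lam) := by
        field_simp; ring
      linarith
  -- combine
  have step : ∑ t ∈ Finset.range k, (S t)^2
      ≤ ∑ t ∈ Finset.range k, (e 0 / (1 - lam)) * S t := by
    refine Finset.sum_le_sum fun t _ => ?_
    rw [sq]
    exact mul_le_mul_of_nonneg_right (hSb t) (hSnn t)
  calc ∑ t ∈ Finset.range k, (S t)^2
      ≤ (e 0 / (1 - lam)) * ∑ t ∈ Finset.range k, S t := by
        rw [Finset.mul_sum]; exact step
    _ ≤ (e 0 / (1 - lam)) * (Se / (1 - lam)) := by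
        exact mul_le_mul_of_nonneg_left (hT k) (div_nonneg (hnn 0) h1l.le)
    _ = e 0 * Se / (1 - lam)^2 := by
        rw [sq]; field_simp
end

section
/- Let λ ∈ (0,1) and k ≥ 1. Define the k×k symmetric matrix Φ_k = Σ_{t=0}^{k−1} φ_t φ_t^T, where φ_t ∈ ℝ^k has entries (φ_t)_j = λ^{t−j+1} for 1 ≤ j ≤ t+1 and 0 otherwise. Then the operator norm of Φ_k satisfies ‖Φ_k‖ ≤ 1/(1−λ)². -/
/-!
`Φ_k = Lᵀ L`, where `L` is the lower-triangular matrix with rows `φ_t`. Each row and each column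
of `L` consists of distinct powers of `λ`, so sums to at most `∑ λⁿ = 1/(1-λ)`; by the Schur test
both `L` and `Lᵀ` have `ℓ²` operator norm at most `1/(1-λ)`, and `‖Φ_k‖ ≤ ‖Lᵀ‖ ‖L‖`.
-/

open Matrix Finset

namespace Matrix

variable {m n : Type*}

theorem sum_vecMulVec_self_eq_transpose_mul [Fintype m] (A : Matrix m n ℝ) :
    ∑ t, vecMulVec (A t) (A t) = Aᵀ * A := by
  ext i j
  simp only [sum_apply, vecMulVec_apply, mul_apply, transpose_apply]

theorem sq_mulVec_apply_le [Fintype n] (A : Matrix m n ℝ) (x : n → ℝ) (i : m) :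
    (A *ᵥ x) i ^ 2 ≤ (∑ j, |A i j|) * ∑ j, |A i j| * x j ^ 2 :=
  sum_sq_le_sum_mul_sum_of_sq_le_mul _ (fun _ _ ↦ abs_nonneg _)
    (fun _ _ ↦ mul_nonneg (abs_nonneg _) (sq_nonneg _))
    (fun j _ ↦ by rw [← mul_assoc, ← sq, sq_abs, mul_pow])

/-- The **Schur test**. -/
theorem norm_toEuclideanLin_le_of_sum_abs_le [Fintype m] [Fintype n] [DecidableEq n]
    (A : Matrix m n ℝ) {R K : ℝ}
    (hrow : ∀ i, ∑ j, |A i j| ≤ R) (hcol : ∀ j, ∑ i, |A i j| ≤ K) (x : EuclideanSpace ℝ n) :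
    ‖toEuclideanLin A x‖ ≤ √(R * K) * ‖x‖ := by
  -- without rows `R` may be negative, so this case is separate
  obtain hm | ⟨⟨i₀⟩⟩ := isEmpty_or_nonempty m
  · rw [Subsingleton.elim (toEuclideanLin A x) 0, norm_zero]
    positivity
  have hR0 : 0 ≤ R := (sum_nonneg fun _ _ ↦ abs_nonneg _).trans (hrow i₀)
  have hweighted : ∀ i, 0 ≤ ∑ j, |A i j| * x j ^ 2 := fun i ↦
    sum_nonneg fun j _ ↦ mul_nonneg (abs_nonneg _) (sq_nonneg _)
  have hsq : ‖toEuclideanLin A x‖ ^ 2 ≤ R * K * ‖x‖ ^ 2 := calc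
    ‖toEuclideanLin A x‖ ^ 2 = ∑ i, (A *ᵥ x.ofLp) i ^ 2 := EuclideanSpace.real_norm_sq_eq _
    _ ≤ ∑ i, R * ∑ j, |A i j| * x j ^ 2 := by
      gcongr with i
      exact (sq_mulVec_apply_le A x.ofLp i).trans (mul_le_mul_of_nonneg_right (hrow i) (hweighted i))
    _ = R * ∑ j, (∑ i, |A i j|) * x j ^ 2 := by
      simp only [← mul_sum, sum_mul]
      rw [sum_comm]
    _ ≤ R * ∑ j, K * x j ^ 2 := by
      gcongr with j
      exact hcol j
    _ = R * K * ‖x‖ ^ 2 := by rw [EuclideanSpace.real_norm_sq_eq, ← mul_sum, mul_assoc]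
  rw [← Real.sqrt_sq (norm_nonneg x), ← Real.sqrt_mul' _ (sq_nonneg _)]
  exact Real.le_sqrt_of_sq_le hsq

end Matrix

/-- The matrix `L` whose `t`-th row is `φ_t`. -/
def geomLowerTriangular (lam : ℝ) (k : ℕ) : Matrix (Fin k) (Fin k) ℝ :=
  of fun t j ↦ if (j : ℕ) ≤ t then lam ^ ((t : ℕ) - j) else 0

theorem sum_pow_le_of_injOn {ι : Type*} (s : Finset ι) {f : ι → ℕ} (hf : Set.InjOn f s)
    {r : ℝ} (h0 : 0 ≤ r) (h1 : r < 1) : ∑ i ∈ s, r ^ f i ≤ (1 - r)⁻¹ := by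
  rw [← sum_image hf, ← tsum_geometric_of_lt_one h0 h1]
  exact (summable_geometric_of_lt_one h0 h1).sum_le_tsum _ fun _ _ ↦ by positivity

section geomLowerTriangular

variable {lam : ℝ} {k : ℕ}

theorem abs_geomLowerTriangular_apply (h0 : 0 ≤ lam) (t j : Fin k) :
    |geomLowerTriangular lam k t j| = if (j : ℕ) ≤ t then lam ^ ((t : ℕ) - j) else 0 :=
  abs_of_nonneg (by dsimp only [geomLowerTriangular, of_apply]; split <;> positivity)

theorem geomLowerTriangular_sum_row_le (h0 : 0 ≤ lam) (h1 : lam < 1) (t : Fin k) :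
    ∑ j, |geomLowerTriangular lam k t j| ≤ (1 - lam)⁻¹ := by
  simp only [abs_geomLowerTriangular_apply h0, ← sum_filter]
  refine sum_pow_le_of_injOn _ (fun i hi j hj hij ↦ ?_) h0 h1
  simp only [coe_filter, mem_univ, true_and, Set.mem_ofPred_eq] at hi hj
  exact Fin.ext (by omega)

theorem geomLowerTriangular_sum_col_le (h0 : 0 ≤ lam) (h1 : lam < 1) (j : Fin k) :
    ∑ t, |geomLowerTriangular lam k t j| ≤ (1 - lam)⁻¹ := by
  simp only [abs_geomLowerTriangular_apply h0, ← sum_filter]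
  refine sum_pow_le_of_injOn _ (fun s hs t ht hst ↦ ?_) h0 h1
  simp only [coe_filter, mem_univ, true_and, Set.mem_ofPred_eq] at hs ht
  exact Fin.ext (by omega)

theorem norm_toEuclideanLin_geomLowerTriangular_le (h0 : 0 ≤ lam) (h1 : lam < 1)
    (x : EuclideanSpace ℝ (Fin k)) :
    ‖toEuclideanLin (geomLowerTriangular lam k) x‖ ≤ (1 - lam)⁻¹ * ‖x‖ := by
  simpa only [Real.sqrt_mul_self (inv_nonneg.2 (sub_nonneg.2 h1.le))] using
    norm_toEuclideanLin_le_of_sum_abs_le _ (geomLowerTriangular_sum_row_le h0 h1)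
      (geomLowerTriangular_sum_col_le h0 h1) x

theorem norm_toEuclideanLin_geomLowerTriangular_transpose_le (h0 : 0 ≤ lam) (h1 : lam < 1)
    (x : EuclideanSpace ℝ (Fin k)) :
    ‖toEuclideanLin (geomLowerTriangular lam k)ᵀ x‖ ≤ (1 - lam)⁻¹ * ‖x‖ := by
  simpa only [Real.sqrt_mul_self (inv_nonneg.2 (sub_nonneg.2 h1.le))] using
    norm_toEuclideanLin_le_of_sum_abs_le (geomLowerTriangular lam k)ᵀ
      (geomLowerTriangular_sum_col_le h0 h1)
      (geomLowerTriangular_sum_row_le h0 h1) x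

end geomLowerTriangular

theorem stmt8_general (lam : ℝ) (hlam : lam ∈ Set.Ioo (0:ℝ) 1) (k : ℕ)
    (φ : Fin k → Fin k → ℝ)
    (hφ : ∀ t j, φ t j = if (j:ℕ) ≤ (t:ℕ) then lam ^ ((t:ℕ) - (j:ℕ)) else 0)
    (Φ : Matrix (Fin k) (Fin k) ℝ)
    (hΦ : Φ = ∑ t, Matrix.vecMulVec (φ t) (φ t)) :
    ∀ x : EuclideanSpace ℝ (Fin k),
      ‖Matrix.toEuclideanLin Φ x‖ ≤ (1/(1-lam)^2) * ‖x‖ := by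
  intro x
  obtain ⟨h0, h1⟩ := hlam
  obtain rfl : φ = geomLowerTriangular lam k := funext fun t ↦ funext (hφ t)
  rw [hΦ, sum_vecMulVec_self_eq_transpose_mul, toLpLin_mul_same, LinearMap.comp_apply]
  calc _ ≤ (1 - lam)⁻¹ * ‖toEuclideanLin (geomLowerTriangular lam k) x‖ :=
        norm_toEuclideanLin_geomLowerTriangular_transpose_le h0.le h1 _
    _ ≤ (1 - lam)⁻¹ * ((1 - lam)⁻¹ * ‖x‖) := by
        gcongr
        exact norm_toEuclideanLin_geomLowerTriangular_le h0.le h1 x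
    _ = 1 / (1 - lam) ^ 2 * ‖x‖ := by rw [← mul_assoc, ← sq, inv_pow, one_div]

/-- the operator (Euclidean) norm of Φ_k = Σ_t φ_t φ_tᵀ, with
φ_t = [λ^t, …, λ, 1, 0, …, 0]ᵀ, is at most 1/(1−λ)². -/
theorem stmt8 (lam : ℝ) (hlam : lam ∈ Set.Ioo (0:ℝ) 1) (k : ℕ) (hk : 1 ≤ k)
    (φ : Fin k → Fin k → ℝ)
    (hφ : ∀ t j, φ t j = if (j:ℕ) ≤ (t:ℕ) then lam ^ ((t:ℕ) - (j:ℕ)) else 0)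
    (Φ : Matrix (Fin k) (Fin k) ℝ)
    (hΦ : Φ = ∑ t, Matrix.vecMulVec (φ t) (φ t)) :
    ∀ x : EuclideanSpace ℝ (Fin k),
      ‖Matrix.toEuclideanLin Φ x‖ ≤ (1/(1-lam)^2) * ‖x‖ :=
  stmt8_general lam hlam k φ hφ Φ hΦ
end

section
/- Weighted cross-term summation bound: let λ ∈ (0,1), let (g_t) and (e_t) be nonnegative sequences with (e_t) non-increasing and summable with sum S_e, and let α > 0. Then Σ_{t=0}^{k−1} g_t · (Σ_{s=0}^{t−1} λ^s e_{t−1−s}) ≤ (α/2) Σ_{t=0}^{k−1} g_t² + e_0 S_e / (2α(1−λ)²). -/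
/-!
Write `S t = ∑_{s<t} λ^s e_{t-1-s}`. Young's inequality `g S ≤ (α/2) g² + S²/(2α)` reduces the
claim to `∑ S_t² ≤ e₀ S_e / (1-λ)²`. Since `e` is non-increasing, `S_t ≤ e₀ ∑ λ^s ≤ e₀/(1-λ)`, so
`∑ S_t² ≤ e₀/(1-λ) · ∑ S_t`; and the recursion `S_{t+1} = e_t + λ S_t` gives
`(1-λ) ∑_{t<k} S_t ≤ ∑_{t<k} e_t ≤ S_e`.
-/

open Finset

def geomConv {R : Type*} [CommSemiring R] (lam : R) (e : ℕ → R) (t : ℕ) : R :=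
  ∑ s ∈ range t, lam ^ s * e (t - 1 - s)

section CommSemiring

variable {R : Type*} [CommSemiring R] (lam : R) (e : ℕ → R)

@[simp]
lemma geomConv_zero : geomConv lam e 0 = 0 := by
  simp [geomConv]

lemma geomConv_succ (t : ℕ) : geomConv lam e (t + 1) = e t + lam * geomConv lam e t := by
  rw [geomConv, sum_range_succ', geomConv, mul_sum, add_comm]
  congr 1
  · simp
  · refine sum_congr rfl fun s _ => ?_
    rw [show t + 1 - 1 - (s + 1) = t - 1 - s by omega, pow_succ]
    ring

lemma sum_range_succ_geomConv (k : ℕ) :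
    ∑ t ∈ range (k + 1), geomConv lam e t =
      ∑ t ∈ range k, e t + lam * ∑ t ∈ range k, geomConv lam e t := by
  rw [sum_range_succ', geomConv_zero, add_zero, mul_sum, ← sum_add_distrib]
  exact sum_congr rfl fun t _ => geomConv_succ lam e t

end CommSemiring

section Real

variable {lam : ℝ} {e : ℕ → ℝ}

lemma geomConv_nonneg (hlam : 0 ≤ lam) (he : ∀ t, 0 ≤ e t) (t : ℕ) : 0 ≤ geomConv lam e t :=
  sum_nonneg fun s _ => mul_nonneg (pow_nonneg hlam s) (he _)

lemma geomConv_le_div_one_sub {M : ℝ} (hlam₀ : 0 ≤ lam) (hlam₁ : lam < 1) (hM : 0 ≤ M)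
    (heM : ∀ t, e t ≤ M) (t : ℕ) : geomConv lam e t ≤ M / (1 - lam) :=
  calc geomConv lam e t
      ≤ ∑ s ∈ range t, lam ^ s * M :=
        sum_le_sum fun s _ => mul_le_mul_of_nonneg_left (heM _) (pow_nonneg hlam₀ s)
    _ = M * ∑ s ∈ Ico 0 t, lam ^ s := by rw [range_eq_Ico, ← sum_mul, mul_comm]
    _ ≤ M * (lam ^ 0 / (1 - lam)) :=
        mul_le_mul_of_nonneg_left (geom_sum_Ico_le_of_lt_one hlam₀ hlam₁) hM
    _ = M / (1 - lam) := by rw [pow_zero, mul_one_div]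

lemma one_sub_mul_sum_geomConv_le (hlam : 0 ≤ lam) (he : ∀ t, 0 ≤ e t) (k : ℕ) :
    (1 - lam) * ∑ t ∈ range k, geomConv lam e t ≤ ∑ t ∈ range k, e t := by
  have hsucc := sum_range_succ_geomConv lam e k
  rw [sum_range_succ] at hsucc
  linarith [geomConv_nonneg hlam he k]

lemma sum_geomConv_sq_le (hlam₀ : 0 ≤ lam) (hlam₁ : lam < 1) (he : ∀ t, 0 ≤ e t)
    (he_anti : Antitone e) (hsum : Summable e) (k : ℕ) :
    ∑ t ∈ range k, geomConv lam e t ^ 2 ≤ e 0 * (∑' t, e t) / (1 - lam) ^ 2 := by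
  have hpos : 0 < 1 - lam := sub_pos.2 hlam₁
  have hS := geomConv_nonneg hlam₀ he
  have hbound : ∀ t, geomConv lam e t ≤ e 0 / (1 - lam) :=
    geomConv_le_div_one_sub hlam₀ hlam₁ (he 0) fun t => he_anti (Nat.zero_le t)
  have hsumS : ∑ t ∈ range k, geomConv lam e t ≤ (∑' t, e t) / (1 - lam) := by
    rw [le_div_iff₀' hpos]
    exact (one_sub_mul_sum_geomConv_le hlam₀ he k).trans
      (hsum.sum_le_tsum _ fun t _ => he t)
  calc ∑ t ∈ range k, geomConv lam e t ^ 2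
      ≤ ∑ t ∈ range k, e 0 / (1 - lam) * geomConv lam e t :=
        sum_le_sum fun t _ => by rw [sq]; exact mul_le_mul_of_nonneg_right (hbound t) (hS t)
    _ = e 0 / (1 - lam) * ∑ t ∈ range k, geomConv lam e t := (mul_sum ..).symm
    _ ≤ e 0 / (1 - lam) * ((∑' t, e t) / (1 - lam)) :=
        mul_le_mul_of_nonneg_left hsumS (div_nonneg (he 0) hpos.le)
    _ = e 0 * (∑' t, e t) / (1 - lam) ^ 2 := by rw [div_mul_div_comm, sq]

end Real

lemma mul_le_young {α : ℝ} (hα : 0 < α) (a b : ℝ) :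
    a * b ≤ α / 2 * a ^ 2 + 1 / (2 * α) * b ^ 2 := by
  have key : 2 * α * (a * b) ≤ 2 * α * (α / 2 * a ^ 2 + 1 / (2 * α) * b ^ 2) := by
    have : 2 * α * (α / 2 * a ^ 2 + 1 / (2 * α) * b ^ 2) = (α * a) ^ 2 + b ^ 2 := by
      field_simp
    rw [this]
    nlinarith [sq_nonneg (α * a - b)]
  exact le_of_mul_le_mul_left key (by positivity)

lemma sum_mul_le_young {ι : Type*} (s : Finset ι) (f g : ι → ℝ) {α : ℝ} (hα : 0 < α) :
    ∑ i ∈ s, f i * g i ≤ α / 2 * ∑ i ∈ s, f i ^ 2 + 1 / (2 * α) * ∑ i ∈ s, g i ^ 2 := by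
  rw [mul_sum, mul_sum, ← sum_add_distrib]
  exact sum_le_sum fun i _ => mul_le_young hα (f i) (g i)

theorem stmt19_general (lam : ℝ) (hlam : lam ∈ Set.Ioo (0:ℝ) 1) (α : ℝ) (hα : 0 < α)
    (g e : ℕ → ℝ) (he : ∀ t, 0 ≤ e t)
    (hmono : ∀ t, e (t+1) ≤ e t) (hsum : Summable e)
    (Se : ℝ) (hSe : Se = ∑' t, e t) (k : ℕ) :
    ∑ t ∈ Finset.range k, g t * (∑ s ∈ Finset.range t, lam^s * e (t-1-s)) ≤
      α/2 * ∑ t ∈ Finset.range k, (g t)^2 + e 0 * Se / (2*α*(1-lam)^2) := by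
  have hsq := sum_geomConv_sq_le hlam.1.le hlam.2 he (antitone_nat_of_succ_le hmono) hsum k
  rw [← hSe] at hsq
  calc ∑ t ∈ range k, g t * geomConv lam e t
      ≤ α / 2 * ∑ t ∈ range k, g t ^ 2 + 1 / (2 * α) * ∑ t ∈ range k, geomConv lam e t ^ 2 :=
        sum_mul_le_young (range k) g (geomConv lam e) hα
    _ ≤ α / 2 * ∑ t ∈ range k, g t ^ 2 + 1 / (2 * α) * (e 0 * Se / (1 - lam) ^ 2) := by
        gcongr
    _ = α / 2 * ∑ t ∈ range k, g t ^ 2 + e 0 * Se / (2 * α * (1 - lam) ^ 2) := by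
        rw [div_mul_div_comm, one_mul]

/-- weighted cross-term summation bound. -/
theorem stmt19 (lam : ℝ) (hlam : lam ∈ Set.Ioo (0:ℝ) 1) (α : ℝ) (hα : 0 < α)
    (g e : ℕ → ℝ) (hg : ∀ t, 0 ≤ g t) (he : ∀ t, 0 ≤ e t)
    (hmono : ∀ t, e (t+1) ≤ e t) (hsum : Summable e)
    (Se : ℝ) (hSe : Se = ∑' t, e t) (k : ℕ) :
    ∑ t ∈ Finset.range k, g t * (∑ s ∈ Finset.range t, lam^s * e (t-1-s)) ≤
      α/2 * ∑ t ∈ Finset.range k, (g t)^2 + e 0 * Se / (2*α*(1-lam)^2) :=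
  stmt19_general lam hlam α hα g e he hmono hsum Se hSe k
end
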